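/- In the Gauss–Markov linear model Y = B^T X + E with E ~ MN(0, Σ_ε, I_N) given X, the conditional total training error MSE_training|X = (1/N) trace(E_X[(Y - B̂_λ^T X)^T(Y - B̂_λ^T X)]) equals trace(Σ_ε) + (1/N) trace(Σ_ε) trace(Z_λ (R_λ X X^T - 2 I_p)) + λ² N trace(R_λ B B^T R_λ X X^T). -/

import Mathlib

open Matrix MeasureTheory ProbabilityTheory

/-- `D` is matrix-normal `MN(M, U, V)`: every linear functional `⟨L, D⟩` is real
Gaussian with mean `⟨L, M⟩` and variance `trace(Lᵀ U L V)`. -/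
def IsMatrixNormal {Ω : Type*} [MeasurableSpace Ω] (μ : Measure Ω) {m n : ℕ}
    (D : Ω → Matrix (Fin m) (Fin n) ℝ) (M : Matrix (Fin m) (Fin n) ℝ)
    (U : Matrix (Fin m) (Fin m) ℝ) (V : Matrix (Fin n) (Fin n) ℝ) : Prop :=
  ∀ L : Matrix (Fin m) (Fin n) ℝ,
    Measure.map (fun ω => ∑ i, ∑ j, L i j * D ω i j) μ =
      gaussianReal (∑ i, ∑ j, L i j * M i j) (Real.toNNReal (Matrix.trace (Lᵀ * U * L * V)))

/-!
The residual is `Y - B̂_λᵀ X = Y P` with `P = I - A Xᵀ R X`, and `Y P = Bᵀ X P + E P`. The ridge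
normal equations give `X P = λN • R X`, so the deterministic part contributes
`λ²N² trace(R B Bᵀ R X Xᵀ)`. The cross term is a centred Gaussian linear functional of `E`, and
each entry `(E P)_{ik}` is a Gaussian linear functional with second moment
`Σ_ii · ∑_j P_{jk}²`, whence `E trace((E P)ᵀ(E P)) = trace Σ · trace(Pᵀ P)`. Finally, since `A` is
a symmetric idempotent, `trace(Pᵀ P) = N + trace(Z (R X Xᵀ - 2 I))`.
-/

open scoped NNReal

namespace Matrix

variable {m n k : Type*} [Fintype m] [Fintype n]

lemma trace_transpose_mul_eq_sum (A B : Matrix m n ℝ) :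
    trace (Aᵀ * B) = ∑ i, ∑ j, A i j * B i j := by
  simp only [trace, diag, mul_apply, transpose_apply]
  exact Finset.sum_comm

lemma trace_transpose_mul_self_add_mul [Fintype k] (W D : Matrix m n ℝ) (C : Matrix n k ℝ) :
    trace (((W + D) * C)ᵀ * ((W + D) * C)) = trace ((W * C)ᵀ * (W * C))
      + 2 * ∑ a, ∑ b, (W * C * Cᵀ) a b * D a b + trace ((D * C)ᵀ * (D * C)) := by
  have hcross : trace ((D * C)ᵀ * (W * C)) = trace ((W * C)ᵀ * (D * C)) := by
    rw [← trace_transpose, transpose_mul, transpose_transpose]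
  have hpair : trace ((W * C)ᵀ * (D * C)) = ∑ a, ∑ b, (W * C * Cᵀ) a b * D a b := by
    rw [← trace_transpose_mul_eq_sum]
    simp only [transpose_mul, transpose_transpose, Matrix.mul_assoc]
    rw [trace_mul_comm C]
    simp only [Matrix.mul_assoc]
  simp only [Matrix.add_mul, transpose_add, Matrix.mul_add, trace_add, hcross, hpair]
  ring

variable [DecidableEq m]

lemma mul_apply_eq_sum_vecMulVec_single_mul (D : Matrix m n ℝ) (C : Matrix n k ℝ) (i : m)
    (c : k) : (D * C) i c = ∑ a, ∑ b, vecMulVec (Pi.single i 1) (fun b => C b c) a b * D a b := by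
  simp [mul_apply, vecMulVec_apply, Pi.single_apply, mul_comm]

lemma trace_transpose_vecMulVec_single_mul_mul [DecidableEq n] (S : Matrix m m ℝ)
    (C : Matrix n k ℝ) (i : m) (c : k) :
    trace ((vecMulVec (Pi.single i 1) (fun b => C b c))ᵀ * S
        * vecMulVec (Pi.single i 1) (fun b => C b c) * 1) = S i i * ∑ b, C b c ^ 2 := by
  rw [Matrix.mul_one]
  simp only [trace, transpose_vecMulVec, diag_apply, mul_apply, vecMulVec_apply, Pi.single_apply,
    mul_ite, mul_one, mul_zero, ite_mul, zero_mul, Finset.sum_ite_eq', Finset.mem_univ,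
    if_true, one_mul, sq, Finset.mul_sum]
  exact Finset.sum_congr rfl fun _ _ => by ring

lemma IsSymm.of_mul_eq_one {M R : Matrix m m ℝ} (hM : M.IsSymm) (h : M * R = 1) : R.IsSymm := by
  rw [← inv_eq_right_inv h]
  exact hM.inv

end Matrix

lemma ProbabilityTheory.HasLaw.integral_sq_of_gaussianReal {Ω : Type*} [MeasurableSpace Ω]
    {μ : Measure Ω} {f : Ω → ℝ} {m : ℝ} {v : ℝ≥0} (hf : HasLaw f (gaussianReal m v) μ) :
    ∫ ω, f ω ^ 2 ∂μ = v + m ^ 2 := by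
  have := hf.hasGaussianLaw.isProbabilityMeasure
  have hvar := variance_eq_sub hf.hasGaussianLaw.memLp_two
  rw [hf.variance_eq, variance_id_gaussianReal, hf.integral_eq, integral_id_gaussianReal] at hvar
  simp only [Pi.pow_apply] at hvar
  linarith

namespace IsMatrixNormal

variable {Ω : Type*} [MeasurableSpace Ω] {μ : Measure Ω} {m n : ℕ}
  {E : Ω → Matrix (Fin m) (Fin n) ℝ} {M : Matrix (Fin m) (Fin n) ℝ}
  {U : Matrix (Fin m) (Fin m) ℝ} {V : Matrix (Fin n) (Fin n) ℝ}

lemma hasLaw_pairing (hE : IsMatrixNormal μ E M U V) (L : Matrix (Fin m) (Fin n) ℝ) :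
    HasLaw (fun ω => ∑ i, ∑ j, L i j * E ω i j)
      (gaussianReal (∑ i, ∑ j, L i j * M i j) (trace (Lᵀ * U * L * V)).toNNReal) μ where
  aemeasurable := aemeasurable_of_map_neZero (by rw [hE L]; infer_instance)
  map_eq := hE L

lemma isProbabilityMeasure (hE : IsMatrixNormal μ E M U V) : IsProbabilityMeasure μ :=
  (hE.hasLaw_pairing 0).hasGaussianLaw.isProbabilityMeasure

lemma integrable_pairing (hE : IsMatrixNormal μ E M U V) (L : Matrix (Fin m) (Fin n) ℝ) :
    Integrable (fun ω => ∑ i, ∑ j, L i j * E ω i j) μ :=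
  (hE.hasLaw_pairing L).hasGaussianLaw.integrable

lemma integral_pairing (hE : IsMatrixNormal μ E M U V) (L : Matrix (Fin m) (Fin n) ℝ) :
    ∫ ω, ∑ i, ∑ j, L i j * E ω i j ∂μ = ∑ i, ∑ j, L i j * M i j := by
  rw [(hE.hasLaw_pairing L).integral_eq, integral_id_gaussianReal]

lemma integrable_sq_pairing (hE : IsMatrixNormal μ E M U V) (L : Matrix (Fin m) (Fin n) ℝ) :
    Integrable (fun ω => (∑ i, ∑ j, L i j * E ω i j) ^ 2) μ :=
  (hE.hasLaw_pairing L).hasGaussianLaw.memLp_two.integrable_sq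

lemma integral_sq_pairing (hE : IsMatrixNormal μ E M U V) (L : Matrix (Fin m) (Fin n) ℝ) :
    ∫ ω, (∑ i, ∑ j, L i j * E ω i j) ^ 2 ∂μ
      = (trace (Lᵀ * U * L * V)).toNNReal + (∑ i, ∑ j, L i j * M i j) ^ 2 :=
  (hE.hasLaw_pairing L).integral_sq_of_gaussianReal

variable {k : Type*} [Fintype k] {S : Matrix (Fin m) (Fin m) ℝ}

lemma integrable_and_integral_trace_transpose_mul_self (hE : IsMatrixNormal μ E 0 S 1)
    (hS : S.PosSemidef) (C : Matrix (Fin n) k ℝ) :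
    Integrable (fun ω => trace ((E ω * C)ᵀ * (E ω * C))) μ ∧
      ∫ ω, trace ((E ω * C)ᵀ * (E ω * C)) ∂μ = trace S * trace (Cᵀ * C) := by
  set L : Fin m → k → Matrix (Fin m) (Fin n) ℝ :=
    fun i c => vecMulVec (Pi.single i 1) (fun b => C b c)
  have hsum : (fun ω => trace ((E ω * C)ᵀ * (E ω * C)))
      = fun ω => ∑ i, ∑ c, (∑ a, ∑ b, L i c a b * E ω a b) ^ 2 := by
    funext ω
    simp only [trace_transpose_mul_eq_sum, ← mul_apply_eq_sum_vecMulVec_single_mul, L, sq]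
  have hintegrable : ∀ i c, Integrable (fun ω => (∑ a, ∑ b, L i c a b * E ω a b) ^ 2) μ :=
    fun i c => hE.integrable_sq_pairing (L i c)
  have hintegral : ∀ i c, ∫ ω, (∑ a, ∑ b, L i c a b * E ω a b) ^ 2 ∂μ
      = S i i * ∑ b, C b c ^ 2 := by
    intro i c
    rw [hE.integral_sq_pairing, trace_transpose_vecMulVec_single_mul_mul]
    simp [hS.diag_nonneg, Finset.sum_nonneg, sq_nonneg, mul_nonneg]
  rw [hsum]
  refine ⟨integrable_finsetSum _ fun i _ => integrable_finsetSum _ fun c _ => hintegrable i c, ?_⟩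
  calc ∫ ω, ∑ i, ∑ c, (∑ a, ∑ b, L i c a b * E ω a b) ^ 2 ∂μ
      = ∑ i, ∑ c, S i i * ∑ b, C b c ^ 2 := by
        rw [integral_finsetSum _ fun i _ => integrable_finsetSum _ fun c _ => hintegrable i c]
        simp only [integral_finsetSum _ fun c _ => hintegrable _ c, hintegral]
    _ = trace S * trace (Cᵀ * C) := by
        rw [trace_transpose_mul_eq_sum, Finset.sum_comm (γ := Fin n)]
        simp only [trace, diag, ← Finset.mul_sum, Finset.sum_mul, sq]

lemma integral_trace_transpose_mul_self_add_mul (hE : IsMatrixNormal μ E 0 S 1)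
    (hS : S.PosSemidef) (W : Matrix (Fin m) (Fin n) ℝ) (C : Matrix (Fin n) k ℝ) :
    ∫ ω, trace (((W + E ω) * C)ᵀ * ((W + E ω) * C)) ∂μ
      = trace ((W * C)ᵀ * (W * C)) + trace S * trace (Cᵀ * C) := by
  have := hE.isProbabilityMeasure
  obtain ⟨hquad_int, hquad⟩ := hE.integrable_and_integral_trace_transpose_mul_self hS C
  have hlin_int := (hE.integrable_pairing (W * C * Cᵀ)).const_mul 2
  simp only [trace_transpose_mul_self_add_mul]
  rw [integral_add _ hquad_int, integral_add (integrable_const _) hlin_int, integral_const_mul,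
    hE.integral_pairing, hquad]
  · simp
  · exact (integrable_const _).add hlin_int

end IsMatrixNormal

noncomputable def centeringMatrix (n : Type*) [Fintype n] [DecidableEq n] : Matrix n n ℝ :=
  1 - (Fintype.card n : ℝ)⁻¹ • vecMulVec (fun _ => 1) (fun _ => 1)

section Centering

variable {n : Type*} [Fintype n] [DecidableEq n]

lemma centeringMatrix_transpose : (centeringMatrix n)ᵀ = centeringMatrix n := by
  rw [centeringMatrix, transpose_sub, transpose_smul, transpose_vecMulVec, Matrix.transpose_one]

lemma centeringMatrix_mul_self : centeringMatrix n * centeringMatrix n = centeringMatrix n := by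
  ext i j
  have : Nonempty n := ⟨i⟩
  have : (Fintype.card n : ℝ) ≠ 0 := Nat.cast_ne_zero.mpr Fintype.card_ne_zero
  simp [centeringMatrix, sub_mul, mul_sub, mul_apply, one_apply, vecMulVec_apply,
    Finset.sum_sub_distrib]

end Centering

section Ridge

variable {p n : Type*} [Fintype p] [Fintype n] [DecidableEq p]
  {X : Matrix p n ℝ} {A : Matrix n n ℝ} {R : Matrix p p ℝ} {c : ℝ}

lemma transpose_eq_self_of_ridge (hA : Aᵀ = A) (hR : (X * A * Xᵀ + c • 1) * R = 1) : Rᵀ = R := by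
  have hsymm : (X * A * Xᵀ + c • 1).IsSymm := by
    simp [IsSymm, transpose_add, transpose_mul, hA, Matrix.mul_assoc]
  exact (hsymm.of_mul_eq_one hR).eq

lemma ridge_mul_residualMaker [DecidableEq n] (hR : (X * A * Xᵀ + c • 1) * R = 1) :
    X * (1 - A * Xᵀ * R * X) = c • (R * X) := by
  have hXAXR : X * A * Xᵀ * R = 1 - c • R := by
    rw [Matrix.add_mul, smul_mul, Matrix.one_mul] at hR
    exact eq_sub_of_add_eq hR
  calc X * (1 - A * Xᵀ * R * X) = X - X * A * Xᵀ * R * X := by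
        simp only [Matrix.mul_sub, Matrix.mul_one, Matrix.mul_assoc]
    _ = c • (R * X) := by
        rw [hXAXR, Matrix.sub_mul, Matrix.one_mul, smul_mul, sub_sub_cancel]

lemma ridge_trace_bias [DecidableEq n] (hR : (X * A * Xᵀ + c • 1) * R = 1) (hRt : Rᵀ = R)
    {q : Type*} [Fintype q] (B : Matrix p q ℝ) :
    trace ((Bᵀ * X * (1 - A * Xᵀ * R * X))ᵀ * (Bᵀ * X * (1 - A * Xᵀ * R * X)))
      = c ^ 2 * trace (R * B * Bᵀ * R * (X * Xᵀ)) := by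
  rw [Matrix.mul_assoc Bᵀ, ridge_mul_residualMaker hR]
  simp only [Matrix.mul_smul, transpose_smul, smul_mul, trace_smul, transpose_mul,
    transpose_transpose, hRt, smul_eq_mul, Matrix.mul_assoc, sq, mul_assoc]
  rw [trace_mul_comm Xᵀ]
  simp only [Matrix.mul_assoc]

lemma trace_residualMaker_transpose_mul_self [DecidableEq n] (hA : Aᵀ = A) (hAA : A * A = A)
    (hRt : Rᵀ = R) :
    trace ((1 - A * Xᵀ * R * X)ᵀ * (1 - A * Xᵀ * R * X))
      = (Fintype.card n : ℝ) + trace (R * (X * A * Xᵀ) * (R * (X * Xᵀ) - 2 • 1)) := by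
  have hAH : trace (A * Xᵀ * R * X) = trace (R * (X * A * Xᵀ)) := by
    rw [trace_mul_comm _ X]
    simp only [← Matrix.mul_assoc]
    rw [trace_mul_comm _ R]
    simp only [Matrix.mul_assoc]
  have hHA : trace (Xᵀ * R * X * A) = trace (R * (X * A * Xᵀ)) := by
    simp only [Matrix.mul_assoc]
    rw [trace_mul_comm]
    simp only [Matrix.mul_assoc]
  have hHAH : trace (Xᵀ * R * X * A * (A * Xᵀ * R * X))
      = trace (R * (X * A * Xᵀ) * (R * (X * Xᵀ))) := by
    simp only [← Matrix.mul_assoc]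
    rw [Matrix.mul_assoc _ A A, hAA]
    simp only [Matrix.mul_assoc]
    rw [trace_mul_comm]
    simp only [Matrix.mul_assoc]
  have hexpand : (1 - A * Xᵀ * R * X)ᵀ * (1 - A * Xᵀ * R * X)
      = 1 - A * Xᵀ * R * X - Xᵀ * R * X * A + Xᵀ * R * X * A * (A * Xᵀ * R * X) := by
    simp only [transpose_sub, transpose_one, transpose_mul, transpose_transpose, hA, hRt,
      Matrix.sub_mul, Matrix.mul_sub, Matrix.one_mul, Matrix.mul_one, Matrix.mul_assoc]
    abel
  rw [hexpand, trace_add, trace_sub, trace_sub, trace_one, hAH, hHA, hHAH, Matrix.mul_sub,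
    trace_sub, Matrix.mul_smul, Matrix.mul_one, trace_smul, nsmul_eq_mul]
  push_cast
  ring

end Ridge

theorem ridge_conditional_total_training_error_general (p q N : ℕ) (hN : 0 < N)
    {Ω : Type*} [MeasurableSpace Ω] (μ : Measure Ω)
    (lam : ℝ)
    (X : Matrix (Fin p) (Fin N) ℝ) (A : Matrix (Fin N) (Fin N) ℝ)
    (hA : A = 1 - (N : ℝ)⁻¹ • Matrix.vecMulVec (fun _ => (1 : ℝ)) (fun _ => (1 : ℝ)))
    (B : Matrix (Fin p) (Fin q) ℝ)
    (E : Ω → Matrix (Fin q) (Fin N) ℝ)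
    (Seps : Matrix (Fin q) (Fin q) ℝ) (hSpsd : Seps.PosSemidef)
    (hMN : IsMatrixNormal μ E 0 Seps 1)
    (Y : Ω → Matrix (Fin q) (Fin N) ℝ) (hY : ∀ ω, Y ω = Bᵀ * X + E ω)
    (R : Matrix (Fin p) (Fin p) ℝ)
    (hR₂ : (X * A * Xᵀ + (lam * N) • 1) * R = 1)
    (Z : Matrix (Fin p) (Fin p) ℝ) (hZ : Z = R * (X * A * Xᵀ))
    (Bhatlam : Ω → Matrix (Fin p) (Fin q) ℝ)
    (hBhatlam : ∀ ω, Bhatlam ω = R * (X * A * (Y ω)ᵀ)) :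
    (N : ℝ)⁻¹ * ∫ ω, Matrix.trace ((Y ω - (Bhatlam ω)ᵀ * X)ᵀ * (Y ω - (Bhatlam ω)ᵀ * X)) ∂μ =
      Matrix.trace Seps
        + (N : ℝ)⁻¹ * Matrix.trace Seps * Matrix.trace (Z * (R * (X * Xᵀ) - 2 • 1))
        + lam ^ 2 * N * Matrix.trace (R * B * Bᵀ * R * (X * Xᵀ)) := by
  have hAc : A = centeringMatrix (Fin N) := by rw [hA, centeringMatrix, Fintype.card_fin]
  have hAt : Aᵀ = A := hAc ▸ centeringMatrix_transpose
  have hAA : A * A = A := hAc ▸ centeringMatrix_mul_self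
  have hRt : Rᵀ = R := transpose_eq_self_of_ridge hAt hR₂
  have hresidual : ∀ ω, Y ω - (Bhatlam ω)ᵀ * X = (Bᵀ * X + E ω) * (1 - A * Xᵀ * R * X) := by
    intro ω
    rw [hBhatlam, ← hY]
    simp only [transpose_mul, transpose_transpose, hAt, hRt, Matrix.mul_sub, Matrix.mul_one,
      Matrix.mul_assoc]
  simp_rw [hresidual]
  rw [hMN.integral_trace_transpose_mul_self_add_mul hSpsd, ridge_trace_bias hR₂ hRt,
    trace_residualMaker_transpose_mul_self hAt hAA hRt, Fintype.card_fin, ← hZ]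
  have hN' : (N : ℝ) ≠ 0 := Nat.cast_ne_zero.mpr hN.ne'
  field_simp
  ring

/-- Conditional total training error in the Gauss–Markov linear model
`Y = Bᵀ X + E`, `E ~ MN(0, Σ_ε, I_N)`:
`(1/N) trace E[(Y - B̂_λᵀX)ᵀ(Y - B̂_λᵀX)] = trace Σ_ε
  + (1/N) trace Σ_ε · trace(Z_λ(R_λ X Xᵀ - 2I_p)) + λ²N trace(R_λ B Bᵀ R_λ X Xᵀ)`. -/
theorem ridge_conditional_total_training_error (p q N : ℕ) (hN : 0 < N)
    {Ω : Type*} [MeasurableSpace Ω] (μ : Measure Ω) [IsProbabilityMeasure μ]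
    (lam : ℝ) (hlam : 0 < lam)
    (X : Matrix (Fin p) (Fin N) ℝ) (A : Matrix (Fin N) (Fin N) ℝ)
    (hA : A = 1 - (N : ℝ)⁻¹ • Matrix.vecMulVec (fun _ => (1 : ℝ)) (fun _ => (1 : ℝ)))
    (B : Matrix (Fin p) (Fin q) ℝ)
    (E : Ω → Matrix (Fin q) (Fin N) ℝ)
    (hE : ∀ i j, Measurable (fun ω => E ω i j))
    (Seps : Matrix (Fin q) (Fin q) ℝ) (hSpsd : Seps.PosSemidef)
    (hMN : IsMatrixNormal μ E 0 Seps 1)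
    (Y : Ω → Matrix (Fin q) (Fin N) ℝ) (hY : ∀ ω, Y ω = Bᵀ * X + E ω)
    (R : Matrix (Fin p) (Fin p) ℝ)
    (hR₁ : R * (X * A * Xᵀ + (lam * N) • 1) = 1)
    (hR₂ : (X * A * Xᵀ + (lam * N) • 1) * R = 1)
    (Z : Matrix (Fin p) (Fin p) ℝ) (hZ : Z = R * (X * A * Xᵀ))
    (Bhatlam : Ω → Matrix (Fin p) (Fin q) ℝ)
    (hBhatlam : ∀ ω, Bhatlam ω = R * (X * A * (Y ω)ᵀ)) :
    (N : ℝ)⁻¹ * ∫ ω, Matrix.trace ((Y ω - (Bhatlam ω)ᵀ * X)ᵀ * (Y ω - (Bhatlam ω)ᵀ * X)) ∂μ =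
      Matrix.trace Seps
        + (N : ℝ)⁻¹ * Matrix.trace Seps * Matrix.trace (Z * (R * (X * Xᵀ) - 2 • 1))
        + lam ^ 2 * N * Matrix.trace (R * B * Bᵀ * R * (X * Xᵀ)) :=
  ridge_conditional_total_training_error_general p q N hN μ lam X A hA B E Seps hSpsd hMN Y hY R hR₂
    Z hZ Bhatlam hBhatlam
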